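/- arXiv:2312.15774 — 2 statements merged into one kernel-verified Lean document; each statement's English description precedes it below -/
import Mathlib

section
/- Let p, q ∈ ℝ be arbitrary. Let X and Y be two distinct random variables from the family {T_{k,l} : 1 ≤ k < l ≤ n} ∪ {T_k : 1 ≤ k ≤ n} ∪ {S_k : 1 ≤ k ≤ n} ∪ {T, S}. If {X, Y} is not equal to {S_k, T_k} for any k ≤ n and not equal to {S, T}, then ν(XY) = 0. -/
open MeasureTheory ProbabilityTheory Finset

namespace GS

noncomputable section

/-- Spin values `{-S, …, S}`, encoded by `Fin (2S+1)`. -/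
def spinVal (S : ℕ) (s : Fin (2 * S + 1)) : ℝ := (s : ℝ) - (S : ℝ)

/-- Configurations: `Σ_{N,S} = {0, ±1, …, ±S}^N`. -/
abbrev Config (N S : ℕ) := Fin N → Fin (2 * S + 1)

/-- Disorder: the couplings `g i j` together with the auxiliary cavity Gaussian `η`. -/
abbrev Disorder (N : ℕ) := (Fin N → Fin N → ℝ) × ℝ

/-- The law of the disorder: i.i.d. standard Gaussians. -/
def disorderLaw (N : ℕ) : Measure (Disorder N) :=
  (Measure.pi fun _ : Fin N => Measure.pi fun _ : Fin N => gaussianReal 0 1).prod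
    (gaussianReal 0 1)

/-- Ghatak–Sherrington Hamiltonian. -/
def Ham (N S : ℕ) (β h D : ℝ) (ω : Disorder N) (σ : Config N S) : ℝ :=
  β / Real.sqrt N *
      ∑ i : Fin N, ∑ j : Fin N,
        (if i < j then ω.1 i j * spinVal S (σ i) * spinVal S (σ j) else 0)
    + D * ∑ i : Fin N, spinVal S (σ i) ^ 2
    + h * ∑ i : Fin N, spinVal S (σ i)

/-- The last spin of a configuration. -/
def lastSpin (N S : ℕ) (σ : Config N S) : ℝ :=
  if hN : 0 < N then spinVal S (σ ⟨N - 1, Nat.sub_lt hN Nat.one_pos⟩) else 0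

/-- Interpolated cavity Hamiltonian `H_N^t`. -/
def HamT (N S : ℕ) (β h D p q t : ℝ) (ω : Disorder N) (σ : Config N S) : ℝ :=
  if hN : 0 < N then
    let last : Fin N := ⟨N - 1, Nat.sub_lt hN Nat.one_pos⟩
    (β / Real.sqrt N *
        ∑ i : Fin N, ∑ j : Fin N,
          (if i < j ∧ j ≠ last then ω.1 i j * spinVal S (σ i) * spinVal S (σ j) else 0)
      + D * ∑ i : Fin N, (if i ≠ last then spinVal S (σ i) ^ 2 else 0)
      + h * ∑ i : Fin N, (if i ≠ last then spinVal S (σ i) else 0))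
    + spinVal S (σ last) *
        (Real.sqrt t * (β / Real.sqrt N) *
            ∑ i : Fin N, (if i ≠ last then ω.1 i last * spinVal S (σ i) else 0)
          + Real.sqrt (1 - t) * β * ω.2 * Real.sqrt q)
    + (1 - t) * (β ^ 2 / 2) * (p - q) * spinVal S (σ last) ^ 2
    + D * spinVal S (σ last) ^ 2 + h * spinVal S (σ last)
  else 0

/-- Gibbs average `⟨f⟩` of a function of `n` replicas, for a fixed Hamiltonian. -/
def gibbsAvg {N S : ℕ} (E : Config N S → ℝ) {n : ℕ}
    (f : (Fin n → Config N S) → ℝ) : ℝ :=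
  (∑ σ : Fin n → Config N S, f σ * ∏ k : Fin n, Real.exp (E (σ k))) /
    (∑ σ : Config N S, Real.exp (E σ)) ^ n

/-- `ν(f) = E⟨f⟩`; the function may also depend on the disorder. -/
def nu (N S n : ℕ) (β h D : ℝ)
    (f : Disorder N → (Fin n → Config N S) → ℝ) : ℝ :=
  ∫ ω, gibbsAvg (Ham N S β h D ω) (f ω) ∂(disorderLaw N)

/-- `ν_t(f)` along the cavity interpolation. -/
def nuT (N S n : ℕ) (β h D p q t : ℝ)
    (f : Disorder N → (Fin n → Config N S) → ℝ) : ℝ :=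
  ∫ ω, gibbsAvg (HamT N S β h D p q t ω) (f ω) ∂(disorderLaw N)

/-- `ν_0(f)`. -/
def nu0 (N S n : ℕ) (β h D p q : ℝ)
    (f : Disorder N → (Fin n → Config N S) → ℝ) : ℝ :=
  nuT N S n β h D p q 0 f

/-- `ν_0'(f)`, the derivative of `t ↦ ν_t(f)` at `t = 0`. -/
def nu0' (N S n : ℕ) (β h D p q : ℝ)
    (f : Disorder N → (Fin n → Config N S) → ℝ) : ℝ :=
  deriv (fun t => nuT N S n β h D p q t f) 0

/-- Overlap `R_{k,l}` of replicas `k, l`. -/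
def overlap (N S : ℕ) {n : ℕ} (σ : Fin n → Config N S) (k l : Fin n) : ℝ :=
  (1 / (N : ℝ)) * ∑ i : Fin N, spinVal S (σ k i) * spinVal S (σ l i)

/-- Overlap without the last-spin contribution, `R⁻_{k,l}`. -/
def overlapMinus (N S : ℕ) {n : ℕ} (σ : Fin n → Config N S) (k l : Fin n) : ℝ :=
  overlap N S σ k l - lastSpin N S (σ k) * lastSpin N S (σ l) / N

/-- `Q_{k,l}`: `p` on the diagonal, `q` off the diagonal. -/
def Qc (p q : ℝ) {n : ℕ} (k l : Fin n) : ℝ := if k = l then p else q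

/-- The high-temperature moment bounds for `(p, q)`. -/
def HighTempBounds (S n : ℕ) (β h D p q : ℝ) : Prop :=
  ∃ C > 0, ∀ N : ℕ, 2 ≤ N → ∀ j : ℕ, 1 ≤ j → ∀ k l : Fin n,
    nu N S n β h D (fun _ σ => (overlap N S σ k l - Qc p q k l) ^ (2 * j)) ≤
      (C * j / N) ^ j

/-- Single-site Gibbs average `b_i = ⟨σ_i⟩`. -/
def bAvg (N S : ℕ) (β h D : ℝ) (ω : Disorder N) (i : Fin N) : ℝ :=
  gibbsAvg (Ham N S β h D ω) (n := 1) (fun σ => spinVal S (σ 0 i))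

/-- Single-site Gibbs average `b̃_i = ⟨σ_i²⟩`. -/
def btAvg (N S : ℕ) (β h D : ℝ) (ω : Disorder N) (i : Fin N) : ℝ :=
  gibbsAvg (Ham N S β h D ω) (n := 1) (fun σ => spinVal S (σ 0 i) ^ 2)

/-- Basis variable `T_{k,l}`. -/
def Tkl (N S : ℕ) (β h D : ℝ) (ω : Disorder N) {n : ℕ} (σ : Fin n → Config N S)
    (k l : Fin n) : ℝ :=
  (1 / (N : ℝ)) * ∑ i : Fin N,
    (spinVal S (σ k i) - bAvg N S β h D ω i) * (spinVal S (σ l i) - bAvg N S β h D ω i)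

/-- Basis variable `T_k`. -/
def Tk (N S : ℕ) (β h D : ℝ) (ω : Disorder N) {n : ℕ} (σ : Fin n → Config N S)
    (k : Fin n) : ℝ :=
  (1 / (N : ℝ)) * ∑ i : Fin N,
    (spinVal S (σ k i) - bAvg N S β h D ω i) * bAvg N S β h D ω i

/-- Basis variable `T`. -/
def Tc (N S : ℕ) (β h D q : ℝ) (ω : Disorder N) : ℝ :=
  (1 / (N : ℝ)) * ∑ i : Fin N, bAvg N S β h D ω i ^ 2 - q

/-- Basis variable `S_l`. -/
def Sl (N S : ℕ) (β h D : ℝ) (ω : Disorder N) {n : ℕ} (σ : Fin n → Config N S)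
    (l : Fin n) : ℝ :=
  (1 / (N : ℝ)) * ∑ i : Fin N, (spinVal S (σ l i) ^ 2 - btAvg N S β h D ω i)

/-- Basis variable `S`. -/
def Sc (N S : ℕ) (β h D p : ℝ) (ω : Disorder N) : ℝ :=
  (1 / (N : ℝ)) * ∑ i : Fin N, btAvg N S β h D ω i - p

/-- `A = ν₀((ε₁ − ε₃)(ε₂ − ε₄)·ε₁ε₂)`. -/
def cA (N S : ℕ) (β h D p q : ℝ) : ℝ :=
  nu0 N S 4 β h D p q (fun _ σ =>
    (lastSpin N S (σ 0) - lastSpin N S (σ 2)) * (lastSpin N S (σ 1) - lastSpin N S (σ 3)) *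
      (lastSpin N S (σ 0) * lastSpin N S (σ 1)))

/-- `D̄ = ν₀((ε₁² − ε₂²)·ε₁²)`. -/
def cD (N S : ℕ) (β h D p q : ℝ) : ℝ :=
  nu0 N S 2 β h D p q (fun _ σ =>
    (lastSpin N S (σ 0) ^ 2 - lastSpin N S (σ 1) ^ 2) * lastSpin N S (σ 0) ^ 2)

/-- `F = ν₀((ε₁ε₃ − ε₂ε₃)·ε₁ε₃)`. -/
def cF (N S : ℕ) (β h D p q : ℝ) : ℝ :=
  nu0 N S 3 β h D p q (fun _ σ =>
    (lastSpin N S (σ 0) * lastSpin N S (σ 2) - lastSpin N S (σ 1) * lastSpin N S (σ 2)) *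
      (lastSpin N S (σ 0) * lastSpin N S (σ 2)))

/-- `G = ν₀((ε₁ε₃ − ε₂ε₃)·ε₁ε₄)`. -/
def cG (N S : ℕ) (β h D p q : ℝ) : ℝ :=
  nu0 N S 4 β h D p q (fun _ σ =>
    (lastSpin N S (σ 0) * lastSpin N S (σ 2) - lastSpin N S (σ 1) * lastSpin N S (σ 2)) *
      (lastSpin N S (σ 0) * lastSpin N S (σ 3)))

/-- `E = ν₀((ε₁² − ε₂²)·ε₁ε₃)`. -/
def cE (N S : ℕ) (β h D p q : ℝ) : ℝ :=
  nu0 N S 3 β h D p q (fun _ σ =>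
    (lastSpin N S (σ 0) ^ 2 - lastSpin N S (σ 1) ^ 2) *
      (lastSpin N S (σ 0) * lastSpin N S (σ 2)))

def cM1 (N S : ℕ) (β h D p q : ℝ) : ℝ :=
  1 - β ^ 2 * (cF N S β h D p q - 3 * cG N S β h D p q)

def cM2 (N S : ℕ) (β h D p q : ℝ) : ℝ :=
  1 - β ^ 2 / 2 * cD N S β h D p q

def cM3 (N S : ℕ) (β h D p q : ℝ) : ℝ :=
  1 - β ^ 2 * (cF N S β h D p q - cG N S β h D p q)

def cM (N S : ℕ) (β h D p q : ℝ) : ℝ :=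
  cM1 N S β h D p q * cM2 N S β h D p q + β ^ 4 * cE N S β h D p q ^ 2

/-- `A₂² = A/(N(1 − β²A))`. -/
def cA2 (N S : ℕ) (β h D p q : ℝ) : ℝ :=
  cA N S β h D p q / ((N : ℝ) * (1 - β ^ 2 * cA N S β h D p q))

/-- `A₁² = (1/(2β²N))·(1/M₃ − M₂/M)`. -/
def cA1 (N S : ℕ) (β h D p q : ℝ) : ℝ :=
  1 / (2 * β ^ 2 * (N : ℝ)) * (1 / cM3 N S β h D p q - cM2 N S β h D p q / cM N S β h D p q)

/-- `B₁² = (2/(Nβ²))·(M₁/M − 1)`. -/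
def cB1 (N S : ℕ) (β h D p q : ℝ) : ℝ :=
  2 / ((N : ℝ) * β ^ 2) * (cM1 N S β h D p q / cM N S β h D p q - 1)

/-- `C₁² = E/(NM)`. -/
def cC1 (N S : ℕ) (β h D p q : ℝ) : ℝ :=
  cE N S β h D p q / ((N : ℝ) * cM N S β h D p q)

/-- `I₃ = ν₀(ε₁ε₂ε₃ε₄) − q²`. -/
def cI3 (N S : ℕ) (β h D p q : ℝ) : ℝ :=
  nu0 N S 4 β h D p q (fun _ σ =>
    lastSpin N S (σ 0) * lastSpin N S (σ 1) * lastSpin N S (σ 2) * lastSpin N S (σ 3)) - q ^ 2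

/-- `I₅ = ν₀(ε₁ε₂ε₃²) − pq`. -/
def cI5 (N S : ℕ) (β h D p q : ℝ) : ℝ :=
  nu0 N S 3 β h D p q (fun _ σ =>
    lastSpin N S (σ 0) * lastSpin N S (σ 1) * lastSpin N S (σ 2) ^ 2) - p * q

/-- `K₃ = I₅`. -/
def cK3 (N S : ℕ) (β h D p q : ℝ) : ℝ := cI5 N S β h D p q

/-- `K₄ = ν₀(ε₁²ε₂²) − p²`. -/
def cK4 (N S : ℕ) (β h D p q : ℝ) : ℝ :=
  nu0 N S 2 β h D p q (fun _ σ =>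
    lastSpin N S (σ 0) ^ 2 * lastSpin N S (σ 1) ^ 2) - p ^ 2

/-- `A₀²`. -/
def cA0 (N S : ℕ) (β h D p q : ℝ) : ℝ :=
  β ^ 2 / cM N S β h D p q *
      (β ^ 2 * cE N S β h D p q * cK4 N S β h D p q + cM2 N S β h D p q * cI5 N S β h D p q) *
      cC1 N S β h D p q
    + 2 * β ^ 2 / cM N S β h D p q *
      (β ^ 2 * cE N S β h D p q * (cE N S β h D p q - cK3 N S β h D p q)
        + cM2 N S β h D p q * (2 * cG N S β h D p q - cI3 N S β h D p q)) *
      cA1 N S β h D p q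
    + β ^ 2 / cM N S β h D p q *
      (β ^ 2 * cE N S β h D p q * cK3 N S β h D p q + cM2 N S β h D p q * cI3 N S β h D p q) *
      cA2 N S β h D p q
    + (β ^ 2 * cE N S β h D p q * cK3 N S β h D p q + cM2 N S β h D p q * cI3 N S β h D p q) /
      (cM N S β h D p q * (N : ℝ))

/-- `B₀²`. -/
def cB0 (N S : ℕ) (β h D p q : ℝ) : ℝ :=
  β ^ 2 / (2 * cM N S β h D p q) *
      (cM1 N S β h D p q * cK4 N S β h D p q - β ^ 2 * cE N S β h D p q * cI5 N S β h D p q) *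
      cB1 N S β h D p q
    + β ^ 2 / cM N S β h D p q *
      (cM1 N S β h D p q * (cE N S β h D p q - cK3 N S β h D p q)
        - β ^ 2 * cE N S β h D p q * (2 * cG N S β h D p q - cI3 N S β h D p q)) *
      cC1 N S β h D p q
    + (cM1 N S β h D p q * cK4 N S β h D p q - β ^ 2 * cE N S β h D p q * cI5 N S β h D p q) /
      (cM N S β h D p q * (N : ℝ))

/-- `C₀²`. -/
def cC0 (N S : ℕ) (β h D p q : ℝ) : ℝ :=
  β ^ 2 / cM N S β h D p q *
      (1 / 2 * cM2 N S β h D p q * cI5 N S β h D p q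
        + β ^ 2 * cE N S β h D p q * cK4 N S β h D p q) *
      cB1 N S β h D p q
    + β ^ 2 / cM N S β h D p q *
      (cM2 N S β h D p q * (2 * cG N S β h D p q - cI3 N S β h D p q)
        + β ^ 2 * cE N S β h D p q * (cE N S β h D p q - cK3 N S β h D p q)) *
      cC1 N S β h D p q
    + (cM2 N S β h D p q * cI5 N S β h D p q + β ^ 2 * cE N S β h D p q * cK4 N S β h D p q) /
      (cM N S β h D p q * (N : ℝ))

/-- `X = O_N(r)`: there is a constant `K` independent of `N` with `|X N| ≤ K·N^{-r/2}`. -/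
def BigO (r : ℝ) (X : ℕ → ℝ) : Prop :=
  ∃ K : ℝ, ∀ N : ℕ, 2 ≤ N → |X N| ≤ K * (N : ℝ) ^ (-r / 2)

/-- A centered jointly Gaussian family with covariance `C`: every linear combination is
a centered Gaussian with the prescribed variance. -/
def IsCenteredGaussian {Ω' : Type} [MeasurableSpace Ω'] (P : Measure Ω') {ι : Type}
    [Fintype ι] (X : ι → Ω' → ℝ) (C : ι → ι → ℝ) : Prop :=
  IsProbabilityMeasure P ∧ (∀ i, Measurable (X i)) ∧
    ∀ c : ι → ℝ,
      P.map (fun ω => ∑ i, c i * X i ω) =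
        gaussianReal 0 (Real.toNNReal (∑ i, ∑ j, c i * c j * C i j))

end

/-- Index set for pairs `(k, l)` with `k < l`. -/
abbrev OffDiag (n : ℕ) := {x : Fin n × Fin n // x.1 < x.2}

/-- Index set for the basis random variables `T_{k,l}, T_k, S_k, T, S`. -/
abbrev BasisIdx (n : ℕ) := OffDiag n ⊕ Fin n ⊕ Fin n ⊕ Unit ⊕ Unit

noncomputable section

/-- The basis random variable indexed by `u`. -/
def basisRV (N S : ℕ) (β h D p q : ℝ) {n : ℕ} :
    BasisIdx n → Disorder N → (Fin n → Config N S) → ℝ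
  | Sum.inl u => fun ω σ => Tkl N S β h D ω σ u.1.1 u.1.2
  | Sum.inr (Sum.inl k) => fun ω σ => Tk N S β h D ω σ k
  | Sum.inr (Sum.inr (Sum.inl l)) => fun ω σ => Sl N S β h D ω σ l
  | Sum.inr (Sum.inr (Sum.inr (Sum.inl _))) => fun ω _ => Tc N S β h D q ω
  | Sum.inr (Sum.inr (Sum.inr (Sum.inr _))) => fun ω _ => Sc N S β h D p ω

end

/-- `{X, Y}` is one of the correlated pairs `{T_k, S_k}` or `{T, S}`. -/
def CorrelatedPair {n : ℕ} (u v : BasisIdx n) : Prop :=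
  (∃ k : Fin n,
      (u = Sum.inr (Sum.inl k) ∧ v = Sum.inr (Sum.inr (Sum.inl k))) ∨
      (v = Sum.inr (Sum.inl k) ∧ u = Sum.inr (Sum.inr (Sum.inl k)))) ∨
  (u = Sum.inr (Sum.inr (Sum.inr (Sum.inl ()))) ∧
      v = Sum.inr (Sum.inr (Sum.inr (Sum.inr ())))) ∨
  (v = Sum.inr (Sum.inr (Sum.inr (Sum.inl ()))) ∧
      u = Sum.inr (Sum.inr (Sum.inr (Sum.inr ()))))

/-!
For fixed disorder the replicas are i.i.d. under the Gibbs measure. Each basis variable depends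
only on the replicas in its support (`{k, l}` for `T_{k,l}`, `{k}` for `T_k` and `S_k`, none for
`T` and `S`) and is centered in each of them: averaging over one replica of its support alone
gives zero, since `σ_i - b_i` and `σ_i² - b̃_i` have Gibbs mean zero. Two distinct basis variables
other than `{T_k, S_k}` and `{T, S}` have different supports, so some replica `r` lies in the
support of exactly one of them; averaging over `r` first already makes `⟨XY⟩` vanish, for every
realization of the disorder.
-/

theorem Fintype.sum_eq_zero_of_sum_update_eq_zero {ι α M : Type*} [Fintype ι] [DecidableEq ι]
    [Fintype α] [AddCommMonoid M] {Φ : (ι → α) → M} (r : ι)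
    (hΦ : ∀ σ, ∑ a, Φ (Function.update σ r a) = 0) :
    ∑ σ, Φ σ = 0 := by
  let e := Equiv.funSplitAt r α
  rw [← e.symm.sum_comp, Fintype.sum_prod_type_right]
  refine Finset.sum_eq_zero fun g _ => ?_
  rcases isEmpty_or_nonempty α with hα | ⟨⟨a₀⟩⟩
  · simp
  have he : ∀ a, e.symm (a, g) = Function.update (e.symm (a₀, g)) r a := by
    intro a
    ext j
    by_cases hj : j = r
    · subst hj; simp [e]
    · simp [e, hj]
  rw [← hΦ (e.symm (a₀, g))]
  exact Finset.sum_congr rfl fun a _ => by rw [he a]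

theorem Finset.eq_and_eq_of_pair_eq_pair {α : Type*} [LinearOrder α] {a b c d : α}
    (hab : a < b) (hcd : c < d) (h : ({a, b} : Finset α) = {c, d}) : a = c ∧ b = d := by
  have h' : ({a, b} : Set α) = {c, d} := by rw [← Finset.coe_pair, ← Finset.coe_pair, h]
  rcases Set.pair_eq_pair_iff.1 h' with h | ⟨rfl, rfl⟩
  · exact h
  · exact absurd (hab.trans hcd) (lt_irrefl a)

theorem Finset.pair_ne_singleton {α : Type*} [DecidableEq α] {a b : α} (hab : a ≠ b) (c : α) :
    ({a, b} : Finset α) ≠ {c} := fun h =>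
  hab <| (Finset.mem_singleton.1 (h ▸ Finset.mem_insert_self a {b})).trans
    (Finset.mem_singleton.1 (h ▸ Finset.mem_insert_of_mem (Finset.mem_singleton_self b))).symm

section Replicas

variable {N S n : ℕ}

/-- The unnormalized Gibbs average of `g` over replica `r` alone, the other replicas frozen,
vanishes. -/
def IsCenteredIn (E : Config N S → ℝ) (r : Fin n) (g : (Fin n → Config N S) → ℝ) : Prop :=
  ∀ σ, ∑ c, g (Function.update σ r c) * Real.exp (E c) = 0

def IndepOfReplica (r : Fin n) (g : (Fin n → Config N S) → ℝ) : Prop :=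
  ∀ σ c, g (Function.update σ r c) = g σ

variable {E : Config N S → ℝ} {r : Fin n} {g f : (Fin n → Config N S) → ℝ}

theorem indepOfReplica_const (a : ℝ) : IndepOfReplica (N := N) (S := S) r fun _ => a :=
  fun _ _ => rfl

theorem isCenteredIn_apply {F : Config N S → ℝ} (hF : ∑ c, F c * Real.exp (E c) = 0) :
    IsCenteredIn E r fun σ => F (σ r) := by
  intro σ
  simpa only [Function.update_self] using hF

theorem IsCenteredIn.mul_indepOfReplica (hg : IsCenteredIn E r g) (hf : IndepOfReplica r f) :
    IsCenteredIn E r fun σ => g σ * f σ := by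
  intro σ
  simp_rw [hf σ, mul_right_comm _ (f σ), ← Finset.sum_mul, hg σ, zero_mul]

theorem IndepOfReplica.mul_isCenteredIn (hf : IndepOfReplica r f) (hg : IsCenteredIn E r g) :
    IsCenteredIn E r fun σ => f σ * g σ := by
  simpa only [mul_comm (f _)] using hg.mul_indepOfReplica hf

theorem IsCenteredIn.sum {ι : Type*} (s : Finset ι) {g : ι → (Fin n → Config N S) → ℝ}
    (hg : ∀ i ∈ s, IsCenteredIn E r (g i)) : IsCenteredIn E r fun σ => ∑ i ∈ s, g i σ := by
  intro σ
  simp_rw [Finset.sum_mul]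
  rw [Finset.sum_comm]
  exact Finset.sum_eq_zero fun i hi => hg i hi σ

theorem IsCenteredIn.gibbsAvg_eq_zero (hg : IsCenteredIn E r g) : gibbsAvg E g = 0 := by
  unfold gibbsAvg
  rw [Fintype.sum_eq_zero_of_sum_update_eq_zero r, zero_div]
  intro σ
  have hprod : ∀ c, ∏ k, Real.exp (E (Function.update σ r c k)) =
      Real.exp (E c) * ∏ k ∈ Finset.univ \ {r}, Real.exp (E (σ k)) := by
    intro c
    rw [← Finset.prod_update_of_mem (Finset.mem_univ r)]
    exact Finset.prod_congr rfl fun k _ =>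
      Function.apply_update (fun _ c => Real.exp (E c)) σ r c k
  simp_rw [hprod, ← mul_assoc, ← Finset.sum_mul, hg σ, zero_mul]

end Replicas

section BasisVariables

variable {N S n : ℕ}

theorem gibbsAvg_one_replica (E : Config N S → ℝ) (f : Config N S → ℝ) :
    gibbsAvg E (n := 1) (fun σ => f (σ 0)) =
      (∑ c, f c * Real.exp (E c)) / ∑ c, Real.exp (E c) := by
  unfold gibbsAvg
  rw [pow_one, ← (Equiv.funUnique (Fin 1) (Config N S)).symm.sum_comp]
  simp

theorem sum_sub_gibbsAvg_one_replica_mul_exp (E : Config N S → ℝ) (f : Config N S → ℝ) :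
    ∑ c, (f c - gibbsAvg E (n := 1) (fun σ => f (σ 0))) * Real.exp (E c) = 0 := by
  have hZ : ∑ c, Real.exp (E c) ≠ 0 :=
    (Finset.sum_pos (fun c _ => Real.exp_pos (E c)) Finset.univ_nonempty).ne'
  simp_rw [sub_mul, Finset.sum_sub_distrib, ← Finset.mul_sum, gibbsAvg_one_replica,
    div_mul_cancel₀ _ hZ, sub_self]

variable (β h D : ℝ) (ω : Disorder N)

theorem isCenteredIn_Tkl_left {k l : Fin n} (hkl : k ≠ l) :
    IsCenteredIn (Ham N S β h D ω) k fun σ => Tkl N S β h D ω σ k l :=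
  (indepOfReplica_const _).mul_isCenteredIn <| IsCenteredIn.sum _ fun i _ =>
    (isCenteredIn_apply (F := fun c => spinVal S (c i) - bAvg N S β h D ω i)
      (sum_sub_gibbsAvg_one_replica_mul_exp _ _)).mul_indepOfReplica
      fun σ c => by rw [Function.update_of_ne hkl.symm]

theorem Tkl_comm (σ : Fin n → Config N S) (k l : Fin n) :
    Tkl N S β h D ω σ k l = Tkl N S β h D ω σ l k := by
  simp only [Tkl, mul_comm (spinVal S (σ k _) - _)]

theorem isCenteredIn_Tkl_right {k l : Fin n} (hkl : k ≠ l) :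
    IsCenteredIn (Ham N S β h D ω) l fun σ => Tkl N S β h D ω σ k l := by
  simpa only [Tkl_comm β h D ω _ k l] using isCenteredIn_Tkl_left β h D ω hkl.symm

theorem isCenteredIn_Tk (k : Fin n) :
    IsCenteredIn (Ham N S β h D ω) k fun σ => Tk N S β h D ω σ k :=
  (indepOfReplica_const _).mul_isCenteredIn <| IsCenteredIn.sum _ fun i _ =>
    (isCenteredIn_apply (F := fun c => spinVal S (c i) - bAvg N S β h D ω i)
      (sum_sub_gibbsAvg_one_replica_mul_exp _ _)).mul_indepOfReplica
      (indepOfReplica_const _)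

theorem isCenteredIn_Sl (l : Fin n) :
    IsCenteredIn (Ham N S β h D ω) l fun σ => Sl N S β h D ω σ l :=
  (indepOfReplica_const _).mul_isCenteredIn <| IsCenteredIn.sum _ fun i _ =>
    isCenteredIn_apply (F := fun c => spinVal S (c i) ^ 2 - btAvg N S β h D ω i)
      (sum_sub_gibbsAvg_one_replica_mul_exp _ _)

theorem indepOfReplica_Tkl {r k l : Fin n} (hk : r ≠ k) (hl : r ≠ l) :
    IndepOfReplica r fun σ => Tkl N S β h D ω σ k l := fun σ c => by
  simp only [Tkl, Function.update_of_ne hk.symm, Function.update_of_ne hl.symm]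

theorem indepOfReplica_Tk {r k : Fin n} (hk : r ≠ k) :
    IndepOfReplica r fun σ => Tk N S β h D ω σ k := fun σ c => by
  simp only [Tk, Function.update_of_ne hk.symm]

theorem indepOfReplica_Sl {r l : Fin n} (hl : r ≠ l) :
    IndepOfReplica r fun σ => Sl N S β h D ω σ l := fun σ c => by
  simp only [Sl, Function.update_of_ne hl.symm]

end BasisVariables

def replicaSupport {n : ℕ} : BasisIdx n → Finset (Fin n)
  | Sum.inl u => {u.1.1, u.1.2}
  | Sum.inr (Sum.inl k) => {k}
  | Sum.inr (Sum.inr (Sum.inl l)) => {l}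
  | Sum.inr (Sum.inr (Sum.inr _)) => ∅

section Support

variable {N S n : ℕ} (β h D p q : ℝ) (ω : Disorder N)

theorem isCenteredIn_basisRV {u : BasisIdx n} {r : Fin n} (hr : r ∈ replicaSupport u) :
    IsCenteredIn (Ham N S β h D ω) r (basisRV N S β h D p q u ω) := by
  rcases u with ⟨⟨k, l⟩, hkl⟩ | k | l | _ | _ <;>
    simp only [replicaSupport, Finset.mem_insert, Finset.mem_singleton,
      Finset.notMem_empty] at hr
  · rcases hr with rfl | rfl
    · exact isCenteredIn_Tkl_left β h D ω hkl.ne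
    · exact isCenteredIn_Tkl_right β h D ω hkl.ne
  · subst hr; exact isCenteredIn_Tk β h D ω r
  · subst hr; exact isCenteredIn_Sl β h D ω r

theorem indepOfReplica_basisRV {u : BasisIdx n} {r : Fin n} (hr : r ∉ replicaSupport u) :
    IndepOfReplica r (basisRV N S β h D p q u ω) := by
  rcases u with ⟨⟨k, l⟩, hkl⟩ | k | l | _ | _ <;>
    simp only [replicaSupport, Finset.mem_insert, Finset.mem_singleton, not_or] at hr
  · exact indepOfReplica_Tkl β h D ω hr.1 hr.2
  · exact indepOfReplica_Tk β h D ω hr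
  · exact indepOfReplica_Sl β h D ω hr
  · exact indepOfReplica_const _
  · exact indepOfReplica_const _

end Support

theorem eq_or_correlatedPair_of_replicaSupport_eq {n : ℕ} {u v : BasisIdx n}
    (h : replicaSupport u = replicaSupport v) : u = v ∨ CorrelatedPair u v := by
  rcases u with ⟨⟨k, l⟩, hkl : k < l⟩ | k | k | ⟨⟩ | ⟨⟩ <;>
    rcases v with ⟨⟨k', l'⟩, hkl' : k' < l'⟩ | k' | k' | ⟨⟩ | ⟨⟩ <;>
    simp_all [replicaSupport, CorrelatedPair]
  all_goals first
    | exact Finset.eq_and_eq_of_pair_eq_pair hkl hkl' h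
    | exact Finset.pair_ne_singleton hkl.ne _ h
    | exact Finset.pair_ne_singleton hkl'.ne _ h.symm
    | exact Finset.insert_ne_empty _ _ h.symm

theorem gibbsAvg_basisRV_mul_basisRV {N S n : ℕ} (β h D p q : ℝ) (ω : Disorder N)
    {u v : BasisIdx n} (huv : replicaSupport u ≠ replicaSupport v) :
    gibbsAvg (Ham N S β h D ω)
      (fun σ => basisRV N S β h D p q u ω σ * basisRV N S β h D p q v ω σ) = 0 := by
  obtain ⟨r, hr⟩ : ∃ r, (r ∈ replicaSupport u ∧ r ∉ replicaSupport v) ∨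
      (r ∈ replicaSupport v ∧ r ∉ replicaSupport u) := by
    by_contra! hall
    exact huv (Finset.ext fun r => ⟨(hall r).1, (hall r).2⟩)
  rcases hr with ⟨hu, hv⟩ | ⟨hv, hu⟩
  · exact ((isCenteredIn_basisRV β h D p q ω hu).mul_indepOfReplica
      (indepOfReplica_basisRV β h D p q ω hv)).gibbsAvg_eq_zero
  · exact ((indepOfReplica_basisRV β h D p q ω hu).mul_isCenteredIn
      (isCenteredIn_basisRV β h D p q ω hv)).gibbsAvg_eq_zero

theorem statement_3_general (N S n : ℕ)
    (β h D : ℝ) (p q : ℝ)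
    (u v : BasisIdx n) (huv : u ≠ v) (hcor : ¬ CorrelatedPair u v) :
    nu N S n β h D (fun ω σ =>
      basisRV N S β h D p q u ω σ * basisRV N S β h D p q v ω σ) = 0 := by
  have hsupp : replicaSupport u ≠ replicaSupport v := fun heq =>
    (eq_or_correlatedPair_of_replicaSupport_eq heq).elim huv hcor
  simp only [nu, gibbsAvg_basisRV_mul_basisRV β h D p q _ hsupp, integral_zero]

/-- pairwise independence of the basis random variables. -/
theorem statement_3 (N S n : ℕ) (hN : 2 ≤ N) (hS : 1 ≤ S) (hn : 1 ≤ n)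
    (β h D : ℝ) (hβ : 0 < β) (hh : 0 ≤ h) (p q : ℝ)
    (u v : BasisIdx n) (huv : u ≠ v) (hcor : ¬ CorrelatedPair u v) :
    nu N S n β h D (fun ω σ =>
      basisRV N S β h D p q u ω σ * basisRV N S β h D p q v ω σ) = 0 :=
  statement_3_general N S n β h D p q u v huv hcor

end GS
end

section
/- Let p, q ∈ ℝ and consider ν₀-averages of a system of n replicas. Let v₁, v₂, v₃ ∈ {1, …, n} be distinct and set either ε(v) = ε_{v₁}ε_{v₃} − ε_{v₂}ε_{v₃} or ε(v) = ε_{v₁}² − ε_{v₂}². Then: (i) for any replica indices a, b ∈ {1, …, n} (possibly equal) with |{a, b} ∩ {v₁, v₂}| ≠ 1, ν₀(ε(v)·ε_a ε_b) = 0; (ii) for any replica index k ∈ {1, …, n} with k ∉ {v₁, v₂}, ν₀(ε(v)·ε_{v₁}ε_k) = −ν₀(ε(v)·ε_{v₂}ε_k). -/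
open MeasureTheory ProbabilityTheory Finset

namespace GS

/-! Relabelling the replicas by a permutation does not change `ν_t`, since the product Gibbs
measure is exchangeable. The transposition of `v₁` and `v₂` turns `ε(v)` into `-ε(v)` and,
under the cardinality condition, fixes `ε_a ε_b`; so both sides of (i) are their own negatives,
and (ii) is the same relabelling applied to `ε(v) ε_{v₁} ε_k`. -/

theorem _root_.Equiv.swap_apply_pair_of_card_inter_ne_one {α : Type*} [DecidableEq α]
    {x y a b : α} (h : (({a, b} : Finset α) ∩ {x, y}).card ≠ 1) :
    (Equiv.swap x y a = a ∧ Equiv.swap x y b = b) ∨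
      (Equiv.swap x y a = b ∧ Equiv.swap x y b = a) := by
  by_cases hxy : x = y
  · simp [hxy]
  by_cases hax : a = x <;> by_cases hay : a = y <;> by_cases hbx : b = x <;>
    by_cases hby : b = y <;> simp_all [Equiv.swap_apply_of_ne_of_ne]

theorem gibbsAvg_comp_perm {N S n : ℕ} (E : Config N S → ℝ) (π : Equiv.Perm (Fin n))
    (f : (Fin n → Config N S) → ℝ) :
    gibbsAvg E (fun σ => f (σ ∘ π)) = gibbsAvg E f := by
  unfold gibbsAvg
  congr 1
  refine Fintype.sum_equiv (Equiv.arrowCongr π.symm (Equiv.refl _)) _ _ fun σ => ?_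
  exact congrArg (f (σ ∘ π) * ·) (Equiv.prod_comp π fun k => Real.exp (E (σ k))).symm

theorem gibbsAvg_neg {N S n : ℕ} (E : Config N S → ℝ) (f : (Fin n → Config N S) → ℝ) :
    gibbsAvg E (fun σ => -f σ) = -gibbsAvg E f := by
  simp only [gibbsAvg, neg_mul, Finset.sum_neg_distrib, neg_div]

theorem nuT_comp_perm {N S n : ℕ} {β h D p q t : ℝ} (π : Equiv.Perm (Fin n))
    (f : Disorder N → (Fin n → Config N S) → ℝ) :
    nuT N S n β h D p q t (fun ω σ => f ω (σ ∘ π)) = nuT N S n β h D p q t f := by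
  simp only [nuT, gibbsAvg_comp_perm]

theorem nuT_neg {N S n : ℕ} {β h D p q t : ℝ} (f : Disorder N → (Fin n → Config N S) → ℝ) :
    nuT N S n β h D p q t (fun ω σ => -f ω σ) = -nuT N S n β h D p q t f := by
  simp only [nuT, gibbsAvg_neg, integral_neg]

theorem nuT_eq_neg_of_comp_perm {N S n : ℕ} {β h D p q t : ℝ} (π : Equiv.Perm (Fin n))
    {f g : Disorder N → (Fin n → Config N S) → ℝ} (hfg : ∀ ω σ, f ω (σ ∘ π) = -g ω σ) :
    nuT N S n β h D p q t f = -nuT N S n β h D p q t g := by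
  rw [← nuT_comp_perm π f, ← nuT_neg]
  simp only [hfg]

theorem nuT_eq_zero_of_comp_perm {N S n : ℕ} {β h D p q t : ℝ} (π : Equiv.Perm (Fin n))
    {f : Disorder N → (Fin n → Config N S) → ℝ} (hf : ∀ ω σ, f ω (σ ∘ π) = -f ω σ) :
    nuT N S n β h D p q t f = 0 := by
  have hneg : nuT N S n β h D p q t f = -nuT N S n β h D p q t f :=
    nuT_eq_neg_of_comp_perm π hf
  linarith

theorem statement_19_general (N S n : ℕ)
    (β h D : ℝ) (p q : ℝ)
    (v₁ v₂ v₃ : Fin n) (h13 : v₁ ≠ v₃) (h23 : v₂ ≠ v₃)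
    (εv : (Fin n → Config N S) → ℝ)
    (hεv : (εv = fun σ =>
        lastSpin N S (σ v₁) * lastSpin N S (σ v₃) -
          lastSpin N S (σ v₂) * lastSpin N S (σ v₃)) ∨
      (εv = fun σ => lastSpin N S (σ v₁) ^ 2 - lastSpin N S (σ v₂) ^ 2)) :
    (∀ a b : Fin n, (({a, b} : Finset (Fin n)) ∩ ({v₁, v₂} : Finset (Fin n))).card ≠ 1 →
      nu0 N S n β h D p q (fun _ σ =>
        εv σ * (lastSpin N S (σ a) * lastSpin N S (σ b))) = 0) ∧
    (∀ k : Fin n, k ≠ v₁ → k ≠ v₂ →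
      nu0 N S n β h D p q (fun _ σ =>
          εv σ * (lastSpin N S (σ v₁) * lastSpin N S (σ k))) =
        - nu0 N S n β h D p q (fun _ σ =>
          εv σ * (lastSpin N S (σ v₂) * lastSpin N S (σ k)))) := by
  have hε : ∀ σ : Fin n → Config N S, εv (σ ∘ Equiv.swap v₁ v₂) = -εv σ := by
    have hv₃ : Equiv.swap v₁ v₂ v₃ = v₃ := Equiv.swap_apply_of_ne_of_ne h13.symm h23.symm
    intro σ
    rcases hεv with rfl | rfl <;>
      simp only [Function.comp_apply, Equiv.swap_apply_left, Equiv.swap_apply_right, hv₃] <;>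
      ring
  refine ⟨fun a b hab => nuT_eq_zero_of_comp_perm (Equiv.swap v₁ v₂) fun _ σ => ?_,
    fun k hk₁ hk₂ => nuT_eq_neg_of_comp_perm (Equiv.swap v₁ v₂) fun _ σ => ?_⟩
  · rcases Equiv.swap_apply_pair_of_card_inter_ne_one hab with ⟨ha, hb⟩ | ⟨ha, hb⟩ <;>
      simp only [Function.comp_apply, hε, ha, hb] <;> ring
  · simp only [Function.comp_apply, hε, Equiv.swap_apply_left,
      Equiv.swap_apply_of_ne_of_ne hk₁ hk₂]
    ring

/-- symmetry identities for `ν₀`-averages of last-spin expressions. -/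
theorem statement_19 (N S n : ℕ) (hN : 2 ≤ N) (hS : 1 ≤ S) (hn : 4 ≤ n)
    (β h D : ℝ) (hβ : 0 < β) (hh : 0 ≤ h) (p q : ℝ)
    (v₁ v₂ v₃ : Fin n) (h12 : v₁ ≠ v₂) (h13 : v₁ ≠ v₃) (h23 : v₂ ≠ v₃)
    (εv : (Fin n → Config N S) → ℝ)
    (hεv : (εv = fun σ =>
        lastSpin N S (σ v₁) * lastSpin N S (σ v₃) -
          lastSpin N S (σ v₂) * lastSpin N S (σ v₃)) ∨
      (εv = fun σ => lastSpin N S (σ v₁) ^ 2 - lastSpin N S (σ v₂) ^ 2)) :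
    (∀ a b : Fin n, (({a, b} : Finset (Fin n)) ∩ ({v₁, v₂} : Finset (Fin n))).card ≠ 1 →
      nu0 N S n β h D p q (fun _ σ =>
        εv σ * (lastSpin N S (σ a) * lastSpin N S (σ b))) = 0) ∧
    (∀ k : Fin n, k ≠ v₁ → k ≠ v₂ →
      nu0 N S n β h D p q (fun _ σ =>
          εv σ * (lastSpin N S (σ v₁) * lastSpin N S (σ k))) =
        - nu0 N S n β h D p q (fun _ σ =>
          εv σ * (lastSpin N S (σ v₂) * lastSpin N S (σ k)))) :=
  statement_19_general N S n β h D p q v₁ v₂ v₃ h13 h23 εv hεv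

end GS
end
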